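/- arXiv:1611.01494 — 2 statements merged into one kernel-verified Lean document; each statement's English description precedes it below -/
import Mathlib

section
/- Let E be a Dedekind complete (conditionally complete) locally solid vector lattice, let B ⊆ E be a topologically bounded set, and let (T_α), (S_α) be nets of linear operators on E (over the same directed index set) converging order-uniformly on every topologically bounded subset of E to linear operators T and S respectively. Assume that each T_α, each S_α, T and S map every topologically bounded set into an order bounded set. For a linear operator R, S' and 0 ≤ x set F(R,S')(x) := sup { R u + S' v : 0 ≤ u, 0 ≤ v, u + v = x }. Then for every a ∈ E with 0 ≤ a there is an index α₀ such that for all α ≥ α₀ and all x ∈ B with 0 ≤ x one has |F(T_α,S_α)(x) − F(T,S)(x)| ≤ a. -/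
open Filter Topology Pointwise

/-- A set `B` is topologically bounded: for every neighborhood `V` of `0` there is `γ > 0`
with `B ⊆ γ • V`. -/
def IsTopBounded {E : Type*} [SMul ℝ E] [TopologicalSpace E] [Zero E] (B : Set E) : Prop :=
  ∀ V ∈ nhds (0 : E), ∃ γ : ℝ, 0 < γ ∧ B ⊆ γ • V

/-- The Riesz–Kantorovich expression: `F(R,S)(x) = sup {R u + S v : 0 ≤ u, 0 ≤ v, u + v = x}`. -/
noncomputable def RKsup {E : Type*} [ConditionallyCompleteLattice E] [AddCommGroup E]
    [Module ℝ E] (R S : E →ₗ[ℝ] E) (x : E) : E :=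
  sSup {z : E | ∃ u v : E, 0 ≤ u ∧ 0 ≤ v ∧ u + v = x ∧ z = R u + S v}

/-! Every part `u` of a decomposition `x = u + v` of `0 ≤ x ∈ B` lies in
`[0, x]`, and by local solidity the union of the intervals `[0, x]`, `x ∈ B`, is again
topologically bounded. So `T α → T₀` and `S α → S₀` order-uniformly on it, and once
`|T α u - T₀ u|` and `|S α v - S₀ v|` are at most `a / 2` on it, each candidate
`T α u + S α v` of one supremum is within `a` of the candidate `T₀ u + S₀ v` of the other.
In particular the candidates for `F(T α, S α)` are bounded above as soon as those for
`F(T₀, S₀)` are, so the order boundedness of `T₀` and `S₀` alone makes both suprema genuine. -/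

theorem IsTopBounded.biUnion_Icc_zero {E : Type*} [Lattice E] [AddCommGroup E] [Module ℝ E]
    [AddLeftMono E] [PosSMulMono ℝ E] [TopologicalSpace E]
    (hsolid : ∀ W ∈ 𝓝 (0 : E), ∃ W' ∈ 𝓝 (0 : E), W' ⊆ W ∧
      ∀ x y : E, y ∈ W' → |x| ≤ |y| → x ∈ W')
    {B : Set E} (hB : IsTopBounded B) : IsTopBounded (⋃ x ∈ B, Set.Icc 0 x) := by
  intro V hV
  obtain ⟨W, hW, hWV, hWsolid⟩ := hsolid V hV
  obtain ⟨γ, hγ, hBγ⟩ := hB W hW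
  refine ⟨γ, hγ, fun u hu => Set.smul_set_mono hWV ?_⟩
  simp only [Set.mem_iUnion, Set.mem_Icc] at hu
  obtain ⟨x, hxB, hu0, hux⟩ := hu
  have hγinv : (0 : ℝ) ≤ γ⁻¹ := inv_nonneg.mpr hγ.le
  have hxW : γ⁻¹ • x ∈ W := (Set.mem_smul_set_iff_inv_smul_mem₀ hγ.ne' _ _).mp (hBγ hxB)
  rw [Set.mem_smul_set_iff_inv_smul_mem₀ hγ.ne']
  refine hWsolid _ _ hxW ?_
  rw [abs_of_nonneg (smul_nonneg hγinv hu0), abs_of_nonneg (smul_nonneg hγinv (hu0.trans hux))]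
  exact smul_le_smul_of_nonneg_left hux hγinv

theorem mem_Icc_of_add_eq {M : Type*} [AddCommMonoid M] [Preorder M] [AddLeftMono M]
    {u v x : M} (hu : 0 ≤ u) (hv : 0 ≤ v) (huv : u + v = x) :
    u ∈ Set.Icc 0 x ∧ v ∈ Set.Icc 0 x :=
  ⟨⟨hu, huv ▸ le_add_of_nonneg_right hv⟩, ⟨hv, huv ▸ le_add_of_nonneg_left hu⟩⟩

section RieszKantorovich

variable {E : Type*} [ConditionallyCompleteLattice E] [AddCommGroup E] [Module ℝ E]

def rieszKantorovichSet (R S : E →ₗ[ℝ] E) (x : E) : Set E :=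
  {z : E | ∃ u v : E, 0 ≤ u ∧ 0 ≤ v ∧ u + v = x ∧ z = R u + S v}

theorem rieszKantorovichSet_nonempty (R S : E →ₗ[ℝ] E) {x : E} (hx : 0 ≤ x) :
    (rieszKantorovichSet R S x).Nonempty :=
  ⟨R x + S 0, x, 0, hx, le_rfl, add_zero x, rfl⟩

variable [AddLeftMono E] {R S R' S' : E →ₗ[ℝ] E} {x c d : E}

theorem bddAbove_rieszKantorovichSet
    (hR : BddAbove (R '' Set.Icc 0 x)) (hS : BddAbove (S '' Set.Icc 0 x)) :
    BddAbove (rieszKantorovichSet R S x) := by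
  obtain ⟨bR, hbR⟩ := hR
  obtain ⟨bS, hbS⟩ := hS
  refine ⟨bR + bS, ?_⟩
  rintro _ ⟨u, v, hu, hv, huv, rfl⟩
  obtain ⟨huI, hvI⟩ := mem_Icc_of_add_eq hu hv huv
  exact add_le_add (hbR ⟨u, huI, rfl⟩) (hbS ⟨v, hvI, rfl⟩)

theorem BddAbove.rieszKantorovichSet_of_le
    (hle : ∀ u v : E, 0 ≤ u → 0 ≤ v → u + v = x → R u + S v ≤ R' u + S' v + c)
    (hbdd : BddAbove (rieszKantorovichSet R' S' x)) :
    BddAbove (rieszKantorovichSet R S x) := by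
  obtain ⟨M, hM⟩ := hbdd
  refine ⟨M + c, ?_⟩
  rintro _ ⟨u, v, hu, hv, huv, rfl⟩
  exact (hle u v hu hv huv).trans (add_le_add_left (hM ⟨u, v, hu, hv, huv, rfl⟩) c)

theorem RKsup_le_RKsup_add
    (hle : ∀ u v : E, 0 ≤ u → 0 ≤ v → u + v = x → R u + S v ≤ R' u + S' v + c)
    (hx : 0 ≤ x)
    (hbdd : BddAbove (rieszKantorovichSet R' S' x)) :
    RKsup R S x ≤ RKsup R' S' x + c := by
  refine csSup_le (rieszKantorovichSet_nonempty R S hx) ?_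
  rintro _ ⟨u, v, hu, hv, huv, rfl⟩
  exact (hle u v hu hv huv).trans (add_le_add_left (le_csSup hbdd ⟨u, v, hu, hv, huv, rfl⟩) c)

theorem abs_RKsup_sub_RKsup_le (hx : 0 ≤ x)
    (hbdd : BddAbove (rieszKantorovichSet R' S' x))
    (hR : ∀ u ∈ Set.Icc 0 x, |R u - R' u| ≤ c) (hS : ∀ v ∈ Set.Icc 0 x, |S v - S' v| ≤ d) :
    |RKsup R S x - RKsup R' S' x| ≤ c + d := by
  have hcandidate : ∀ P Q P' Q' : E →ₗ[ℝ] E,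
      (∀ u ∈ Set.Icc 0 x, P u - P' u ≤ c) → (∀ v ∈ Set.Icc 0 x, Q v - Q' v ≤ d) →
      ∀ u v : E, 0 ≤ u → 0 ≤ v → u + v = x → P u + Q v ≤ P' u + Q' v + (c + d) := by
    intro P Q P' Q' hP hQ u v hu hv huv
    obtain ⟨huI, hvI⟩ := mem_Icc_of_add_eq hu hv huv
    have := add_le_add (hP u huI) (hQ v hvI)
    rw [← add_sub_add_comm, sub_le_iff_le_add'] at this
    exact this
  have hdown := hcandidate R S R' S' (fun u hu => (le_abs_self _).trans (hR u hu))
    (fun v hv => (le_abs_self _).trans (hS v hv))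
  have hup := hcandidate R' S' R S
    (fun u hu => (le_abs_self _).trans (abs_sub_comm (R u) _ ▸ hR u hu))
    (fun v hv => (le_abs_self _).trans (abs_sub_comm (S v) _ ▸ hS v hv))
  rw [abs_le', neg_sub, sub_le_iff_le_add', sub_le_iff_le_add']
  exact ⟨RKsup_le_RKsup_add hdown hx hbdd,
    RKsup_le_RKsup_add hup hx (hbdd.rieszKantorovichSet_of_le hdown)⟩

end RieszKantorovich

theorem rksup_orderUnifConv_on_bounded_general
    {E : Type*} [ConditionallyCompleteLattice E] [AddCommGroup E] [Module ℝ E]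
    [CovariantClass E E (· + ·) (· ≤ ·)] [PosSMulMono ℝ E]
    [TopologicalSpace E]
    (hsolid : ∀ W ∈ 𝓝 (0 : E), ∃ W' ∈ 𝓝 (0 : E), W' ⊆ W ∧
      ∀ x y : E, y ∈ W' → |x| ≤ |y| → x ∈ W')
    {ι : Type*} [SemilatticeSup ι]
    (B : Set E) (hB : IsTopBounded B)
    (T S : ι → E →ₗ[ℝ] E) (T₀ S₀ : E →ₗ[ℝ] E)
    (hT₀ob : ∀ C : Set E, IsTopBounded C → ∃ a : E, 0 ≤ a ∧ T₀ '' C ⊆ Set.Icc (-a) a)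
    (hS₀ob : ∀ C : Set E, IsTopBounded C → ∃ a : E, 0 ≤ a ∧ S₀ '' C ⊆ Set.Icc (-a) a)
    (hT : ∀ C : Set E, IsTopBounded C →
      ∀ a : E, 0 ≤ a → ∃ α₀ : ι, ∀ α ≥ α₀, ∀ x ∈ C, |T α x - T₀ x| ≤ a)
    (hS : ∀ C : Set E, IsTopBounded C →
      ∀ a : E, 0 ≤ a → ∃ α₀ : ι, ∀ α ≥ α₀, ∀ x ∈ C, |S α x - S₀ x| ≤ a) :
    ∀ a : E, 0 ≤ a → ∃ α₀ : ι, ∀ α ≥ α₀, ∀ x ∈ B, 0 ≤ x →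
      |RKsup (T α) (S α) x - RKsup T₀ S₀ x| ≤ a := by
  intro a ha
  set C := ⋃ x ∈ B, Set.Icc 0 x
  have hC : IsTopBounded C := hB.biUnion_Icc_zero hsolid
  have hIcc : ∀ x ∈ B, Set.Icc 0 x ⊆ C := fun x hx => Set.subset_biUnion_of_mem hx
  have ha2 : (0 : E) ≤ (2 : ℝ)⁻¹ • a := smul_nonneg (by norm_num) ha
  obtain ⟨α₁, hα₁⟩ := hT C hC _ ha2
  obtain ⟨α₂, hα₂⟩ := hS C hC _ ha2
  obtain ⟨b, -, hb⟩ := hT₀ob C hC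
  obtain ⟨c, -, hc⟩ := hS₀ob C hC
  refine ⟨α₁ ⊔ α₂, fun α hα x hxB hx => ?_⟩
  have hbdd : BddAbove (rieszKantorovichSet T₀ S₀ x) := bddAbove_rieszKantorovichSet
    (bddAbove_Icc.mono ((Set.image_mono (hIcc x hxB)).trans hb))
    (bddAbove_Icc.mono ((Set.image_mono (hIcc x hxB)).trans hc))
  calc |RKsup (T α) (S α) x - RKsup T₀ S₀ x| ≤ (2 : ℝ)⁻¹ • a + (2 : ℝ)⁻¹ • a :=
        abs_RKsup_sub_RKsup_le hx hbdd
          (fun u hu => hα₁ α (le_sup_left.trans hα) u (hIcc x hxB hu))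
          (fun v hv => hα₂ α (le_sup_right.trans hα) v (hIcc x hxB hv))
    _ = a := by rw [← add_smul]; norm_num

/-- In a Dedekind complete locally solid vector lattice `E`, if `B` is a
topologically bounded set and `(T α) → T₀`, `(S α) → S₀` order-uniformly on every topologically
bounded subset of `E`, with all operators mapping every topologically bounded set into an order
bounded set, then the Riesz–Kantorovich suprema `F(T α, S α)` converge to `F(T₀, S₀)`
order-uniformly on `B ∩ E₊`. -/
theorem rksup_orderUnifConv_on_bounded
    {E : Type*} [ConditionallyCompleteLattice E] [AddCommGroup E] [Module ℝ E]
    [CovariantClass E E (· + ·) (· ≤ ·)] [PosSMulMono ℝ E]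
    [TopologicalSpace E] [IsTopologicalAddGroup E] [ContinuousSMul ℝ E]
    (hsolid : ∀ W ∈ 𝓝 (0 : E), ∃ W' ∈ 𝓝 (0 : E), W' ⊆ W ∧
      ∀ x y : E, y ∈ W' → |x| ≤ |y| → x ∈ W')
    {ι : Type*} [Nonempty ι] [SemilatticeSup ι]
    (B : Set E) (hB : IsTopBounded B)
    (T S : ι → E →ₗ[ℝ] E) (T₀ S₀ : E →ₗ[ℝ] E)
    (hTob : ∀ α : ι, ∀ C : Set E, IsTopBounded C →
      ∃ a : E, 0 ≤ a ∧ (T α) '' C ⊆ Set.Icc (-a) a)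
    (hSob : ∀ α : ι, ∀ C : Set E, IsTopBounded C →
      ∃ a : E, 0 ≤ a ∧ (S α) '' C ⊆ Set.Icc (-a) a)
    (hT₀ob : ∀ C : Set E, IsTopBounded C → ∃ a : E, 0 ≤ a ∧ T₀ '' C ⊆ Set.Icc (-a) a)
    (hS₀ob : ∀ C : Set E, IsTopBounded C → ∃ a : E, 0 ≤ a ∧ S₀ '' C ⊆ Set.Icc (-a) a)
    (hT : ∀ C : Set E, IsTopBounded C →
      ∀ a : E, 0 ≤ a → ∃ α₀ : ι, ∀ α ≥ α₀, ∀ x ∈ C, |T α x - T₀ x| ≤ a)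
    (hS : ∀ C : Set E, IsTopBounded C →
      ∀ a : E, 0 ≤ a → ∃ α₀ : ι, ∀ α ≥ α₀, ∀ x ∈ C, |S α x - S₀ x| ≤ a) :
    ∀ a : E, 0 ≤ a → ∃ α₀ : ι, ∀ α ≥ α₀, ∀ x ∈ B, 0 ≤ x →
      |RKsup (T α) (S α) x - RKsup T₀ S₀ x| ≤ a :=
  rksup_orderUnifConv_on_bounded_general hsolid B hB T S T₀ S₀ hT₀ob hS₀ob hT hS
end

section
/- Let E be a locally solid vector lattice. If T and S are no-bounded linear operators on E, then the composition T ∘ S is no-bounded; that is, there exists a neighborhood of 0 whose image under T ∘ S is order bounded. -/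
open Filter Topology Pointwise

/-!
A solid neighbourhood `W` of `0` absorbs every order interval: once `t • b ∈ W`, solidity puts
`t • [-b, b] = [-t • b, t • b]` inside `W`. Hence `S` maps the neighbourhood `t • U` into a solid
neighbourhood inside the one that `T` maps into an order interval.
-/

theorem smul_Icc_neg_of_pos {𝕜 E : Type*} [Field 𝕜] [LinearOrder 𝕜] [IsStrictOrderedRing 𝕜]
    [AddCommGroup E] [PartialOrder E] [Module 𝕜 E] [PosSMulMono 𝕜 E] {t : 𝕜} (ht : 0 < t) (b : E) :
    t • Set.Icc (-b) b = Set.Icc (-(t • b)) (t • b) := by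
  rw [← Set.image_smul, ← smul_neg]
  exact (OrderIso.smulRight (β := E) ht).image_Icc _ _

theorem exists_pos_smul_mem_of_mem_nhds_zero {E : Type*} [Zero E] [MulActionWithZero ℝ E]
    [TopologicalSpace E] [ContinuousSMul ℝ E] {V : Set E} (hV : V ∈ 𝓝 0) (b : E) :
    ∃ t : ℝ, 0 < t ∧ t • b ∈ V := by
  have : Tendsto (fun t : ℝ ↦ t • b) (𝓝[>] 0) (𝓝 0) :=
    ((continuous_id.smul continuous_const).tendsto' 0 0 (zero_smul ℝ b)).mono_left
      nhdsWithin_le_nhds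
  obtain ⟨t, htV, ht⟩ := ((this.eventually hV).and self_mem_nhdsWithin).exists
  exact ⟨t, ht, htV⟩

namespace LatticeOrderedAddCommGroup

theorem IsSolid.Icc_neg_subset {α : Type*} [Lattice α] [AddCommGroup α] [AddLeftMono α]
    {s : Set α} (hs : IsSolid s) {y : α} (hy : y ∈ s) : Set.Icc (-y) y ⊆ s :=
  fun _ hx ↦ hs hy <| (abs_le'.2 ⟨hx.2, neg_le.1 hx.1⟩).trans (le_abs_self y)

theorem IsSolid.exists_pos_smul_Icc_neg_subset {E : Type*} [AddCommGroup E] [Lattice E]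
    [AddLeftMono E] [Module ℝ E] [PosSMulMono ℝ E] [TopologicalSpace E] [ContinuousSMul ℝ E]
    {W : Set E} (hW : W ∈ 𝓝 0) (hWs : IsSolid W) (b : E) :
    ∃ t : ℝ, 0 < t ∧ t • Set.Icc (-b) b ⊆ W := by
  obtain ⟨t, ht, htb⟩ := exists_pos_smul_mem_of_mem_nhds_zero hW b
  exact ⟨t, ht, smul_Icc_neg_of_pos ht b ▸ hWs.Icc_neg_subset htb⟩

end LatticeOrderedAddCommGroup

theorem noBounded_comp_general
    {E : Type*} [AddCommGroup E] [Lattice E] [Module ℝ E]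
    [CovariantClass E E (· + ·) (· ≤ ·)] [PosSMulMono ℝ E]
    [TopologicalSpace E] [ContinuousSMul ℝ E]
    (hsolid : ∀ W ∈ 𝓝 (0 : E), ∃ W' ∈ 𝓝 (0 : E), W' ⊆ W ∧
      ∀ x y : E, y ∈ W' → |x| ≤ |y| → x ∈ W')
    (T S : E →ₗ[ℝ] E)
    (hT : ∃ U ∈ 𝓝 (0 : E), ∃ a : E, 0 ≤ a ∧ T '' U ⊆ Set.Icc (-a) a)
    (hS : ∃ U ∈ 𝓝 (0 : E), ∃ a : E, 0 ≤ a ∧ S '' U ⊆ Set.Icc (-a) a) :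
    ∃ U ∈ 𝓝 (0 : E), ∃ a : E, 0 ≤ a ∧ (T ∘ₗ S) '' U ⊆ Set.Icc (-a) a := by
  obtain ⟨V, hV, a, ha, hTV⟩ := hT
  obtain ⟨U, hU, b, -, hSU⟩ := hS
  obtain ⟨W, hW, hWV, hWs⟩ := hsolid V hV
  have hWsolid : LatticeOrderedAddCommGroup.IsSolid W := fun y hy x hxy ↦ hWs x y hy hxy
  obtain ⟨t, ht, htW⟩ := hWsolid.exists_pos_smul_Icc_neg_subset hW b
  refine ⟨t • U, (set_smul_mem_nhds_zero_iff ht.ne').2 hU, a, ha, ?_⟩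
  calc (T ∘ₗ S) '' (t • U) = T '' (t • S '' U) := by
        rw [LinearMap.coe_comp, Set.image_comp, image_smul_set]
    _ ⊆ T '' V := Set.image_mono ((Set.smul_set_mono hSU).trans htW |>.trans hWV)
    _ ⊆ Set.Icc (-a) a := hTV

/-- In a locally solid vector lattice `E`, the composition of two no-bounded
linear operators is no-bounded. -/
theorem noBounded_comp
    {E : Type*} [AddCommGroup E] [Lattice E] [Module ℝ E]
    [CovariantClass E E (· + ·) (· ≤ ·)] [PosSMulMono ℝ E]
    [TopologicalSpace E] [IsTopologicalAddGroup E] [ContinuousSMul ℝ E]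
    (hsolid : ∀ W ∈ 𝓝 (0 : E), ∃ W' ∈ 𝓝 (0 : E), W' ⊆ W ∧
      ∀ x y : E, y ∈ W' → |x| ≤ |y| → x ∈ W')
    (T S : E →ₗ[ℝ] E)
    (hT : ∃ U ∈ 𝓝 (0 : E), ∃ a : E, 0 ≤ a ∧ T '' U ⊆ Set.Icc (-a) a)
    (hS : ∃ U ∈ 𝓝 (0 : E), ∃ a : E, 0 ≤ a ∧ S '' U ⊆ Set.Icc (-a) a) :
    ∃ U ∈ 𝓝 (0 : E), ∃ a : E, 0 ≤ a ∧ (T ∘ₗ S) '' U ⊆ Set.Icc (-a) a :=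
  noBounded_comp_general hsolid T S hT hS
end
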